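/- Let M and B be finite-dimensional complex Hilbert spaces, let (p_m)_{m=1}^{|M|} be a probability distribution, let ξ_m be states on B, and set ξ^{MB} = ∑_m p_m |m⟩⟨m| ⊗ ξ_m, ξ^M = ∑_m p_m |m⟩⟨m|, ξ^B = ∑_m p_m ξ_m. Let 0 ≤ ε ≤ 1 and suppose that for every measurement superoperator 𝓜 on B one has ‖(id_M ⊗ 𝓜)(ξ^{MB}) − ξ^M ⊗ 𝓜(ξ^B)‖₁ ≤ ε. Then for every measurement superoperator on B with POVM elements N_1,…,N_K, the joint probability distribution q(m,i) = p_m·Tr[N_i ξ_m] satisfies I(M;X)_q ≤ 4ε·log₂|M| + 2η(1−ε) + 2η(ε), where η(x) = −x·log₂ x with η(0) = 0. In particular, the accessible information I_acc(M;B)_ξ, defined as the supremum of I(M;X)_q over all measurement superoperators on B, is at most 4ε·log₂|M| + 2η(1−ε) + 2η(ε). -/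

import Mathlib

open scoped BigOperators Kronecker Classical ComplexOrder
open Matrix MeasureTheory

noncomputable section

/-- Outer product `|v⟩⟨v|`. -/
def outer {A : Type*} [Fintype A] (v : A → ℂ) : Matrix A A ℂ :=
  Matrix.of fun i j => v i * star (v j)

/-- Trace norm `‖X‖₁ = Tr √(XᴴX)`. -/
def traceNorm {A : Type*} [Fintype A] [DecidableEq A] (X : Matrix A A ℂ) : ℝ :=
  (((Matrix.posSemidef_conjTranspose_mul_self X).1.eigenvectorUnitary : Matrix A A ℂ) *
      Matrix.diagonal (((↑) : ℝ → ℂ) ∘ (Real.sqrt ∘ (Matrix.posSemidef_conjTranspose_mul_self X).1.eigenvalues)) *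
      (star (Matrix.posSemidef_conjTranspose_mul_self X).1.eigenvectorUnitary : Matrix A A ℂ)).trace.re

/-- Frobenius norm `‖X‖₂`. -/
def frobNorm {A : Type*} [Fintype A] (X : Matrix A A ℂ) : ℝ :=
  Real.sqrt ((Xᴴ * X).trace.re)

/-- Operator norm (largest singular value) `‖X‖_∞`. -/
def opNorm {A : Type*} [Fintype A] [DecidableEq A] (X : Matrix A A ℂ) : ℝ :=
  ‖Matrix.toEuclideanCLM (𝕜 := ℂ) X‖

instance matrixMeasurableSpace {m n : Type*} : MeasurableSpace (Matrix m n ℂ) :=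
  inferInstanceAs (MeasurableSpace (m → n → ℂ))

/-- A measurement superoperator (given by its POVM elements `Ms`) applied to the second
factor of a bipartite operator, tensored with the identity on the first factor `W`. -/
def measApply {W A X : Type*} [Fintype A] [DecidableEq X]
    (Ms : X → Matrix A A ℂ) (ρ : Matrix (W × A) (W × A) ℂ) :
    Matrix (W × X) (W × X) ℂ :=
  Matrix.of fun p q =>
    if p.2 = q.2 then ∑ a : A, ∑ a' : A, Ms p.2 a a' * ρ (p.1, a') (q.1, a) else 0

/-- A measurement superoperator applied to an operator (no side register). -/
def measApply0 {A X : Type*} [Fintype A] [DecidableEq X]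
    (Ms : X → Matrix A A ℂ) (ρ : Matrix A A ℂ) : Matrix X X ℂ :=
  Matrix.of fun i j => if i = j then ∑ a : A, ∑ a' : A, Ms i a a' * ρ a' a else 0

/-- The elements `Ms` form a POVM: each is positive semidefinite and they sum to `I`. -/
def IsPOVM {A X : Type*} [Fintype A] [Fintype X] [DecidableEq A]
    (Ms : X → Matrix A A ℂ) : Prop :=
  (∀ i, (Ms i).PosSemidef) ∧ ∑ i, Ms i = 1

/-- The tuple of unit vectors `χ` defines an `(s,η)`-quasi-measurement:
`(|A|/s) ∑ᵢ |χᵢ⟩⟨χᵢ| ≤ η I`. -/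
def IsQuasiTuple {A : Type*} [Fintype A] [DecidableEq A] (s : ℕ) (η : ℝ)
    (χ : Fin s → A → ℂ) : Prop :=
  (∀ i, ∑ a, Complex.normSq (χ i a) = 1) ∧
  ((η : ℂ) • (1 : Matrix A A ℂ) -
    ((Fintype.card A : ℂ) / (s : ℂ)) • ∑ i, outer (χ i)).PosSemidef

/-- The kernel elements `(|A|/s)|χᵢ⟩⟨χᵢ|` of an `(s,η)`-quasi-measurement. -/
def quasiKernel {A : Type*} [Fintype A] (s : ℕ) (χ : Fin s → A → ℂ) :
    Fin s → Matrix A A ℂ :=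
  fun i => ((Fintype.card A : ℂ) / (s : ℂ)) • outer (χ i)

/-- `η(x) = −x·log₂ x` (with `η(0) = 0`, since `Real.logb 2 0 = 0`). -/
def etaFn (x : ℝ) : ℝ := -(x * Real.logb 2 x)

/-- Mutual information (base 2) of a finitely supported joint distribution `q`,
with `0·log(·) = 0` convention. -/
def mutInfo {M X : Type*} [Fintype M] [Fintype X] (q : M → X → ℝ) : ℝ :=
  ∑ m, ∑ i, q m i * Real.logb 2 (q m i / ((∑ i', q m i') * (∑ m', q m' i)))


/-!
Measuring `B` turns the hypothesis into a classical one: the measured operator is diagonal with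
entries `q(m,i) - q_M(m) q_X(i)`, so `q` is `ε`-close in `ℓ¹` to the product of its marginals.
Writing `I(M;X) = ∑ᵢ q_X(i) ∑ₘ (η(q_M(m)) - η(q(m|i)))`, concavity of `η` bounds each bracket
by the binary entropy `h(|q_M(m) - q(m|i)|)`. Jensen's inequality for `h` over the `|M|·|X|`
terms with weights `q_X(i)/|M|` gives `|M| h(δ/|M|)`, where `δ ≤ ε` is the `ℓ¹` distance, and
`|M| h(ε/|M|) ≤ ε log|M| + η(ε) + ε`.
-/

open Real

theorem ConcaveOn.map_add_sub_map_le {s : Set ℝ} {f : ℝ → ℝ} (hf : ConcaveOn ℝ s f)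
    {a b t : ℝ} (ha : a ∈ s) (hbt : b + t ∈ s) (hab : a ≤ b) (ht : 0 ≤ t) :
    f (b + t) - f b ≤ f (a + t) - f a := by
  rcases hab.eq_or_lt with rfl | hab
  · rfl
  -- `b` and `a + t` are convex combinations of `a` and `b + t` with swapped weights
  have hL : 0 < b + t - a := by linarith
  have hw : t / (b + t - a) + (b - a) / (b + t - a) = 1 := by field_simp; ring
  have hb := hf.2 ha hbt (by positivity) (by linarith [div_pos (sub_pos.2 hab) hL]) hw
  have hat := hf.2 ha hbt (by linarith [div_pos (sub_pos.2 hab) hL]) (by positivity)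
    ((add_comm _ _).trans hw)
  simp only [smul_eq_mul] at hb hat
  rw [show t / (b + t - a) * a + (b - a) / (b + t - a) * (b + t) = b by field_simp; ring] at hb
  rw [show (b - a) / (b + t - a) * a + t / (b + t - a) * (b + t) = a + t by
    field_simp; ring] at hat
  linear_combination hb + hat - (f a + f (b + t)) * hw

theorem negMulLog_sub_negMulLog_le_binEntropy {x y : ℝ} (hx0 : 0 ≤ x) (hx1 : x ≤ 1)
    (hy0 : 0 ≤ y) (hy1 : y ≤ 1) : negMulLog x - negMulLog y ≤ binEntropy |x - y| := by
  have hη := concaveOn_negMulLog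
  rcases le_total y x with hyx | hxy
  · have h := hη.map_add_sub_map_le Set.self_mem_Ici (show y + (x - y) ∈ Set.Ici 0 by simpa)
      hy0 (sub_nonneg.2 hyx)
    have h1 := negMulLog_nonneg (sub_nonneg.2 (hx1.trans' (sub_le_self x hy0))) (by linarith)
    rw [abs_of_nonneg (sub_nonneg.2 hyx), binEntropy_eq_negMulLog_add_negMulLog_one_sub]
    simp only [add_sub_cancel, zero_add, negMulLog_zero, sub_zero] at h
    linarith
  · have h := hη.map_add_sub_map_le hx0 (show 1 - (y - x) + (y - x) ∈ Set.Ici 0 by simp)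
      (by linarith) (sub_nonneg.2 hxy)
    have h1 := negMulLog_nonneg (sub_nonneg.2 hxy) (by linarith)
    rw [abs_sub_comm, abs_of_nonneg (sub_nonneg.2 hxy),
      binEntropy_eq_negMulLog_add_negMulLog_one_sub]
    simp only [sub_add_cancel, add_sub_cancel, negMulLog_one] at h
    linarith

theorem mul_binEntropy_div_le {d ε : ℝ} (hd : 0 < d) (hεd : ε ≤ d) :
    d * binEntropy (ε / d) ≤ ε * log d + negMulLog ε + ε := by
  have h1 : d * negMulLog (ε / d) = ε * log d + negMulLog ε := by
    rw [div_eq_mul_inv, negMulLog_mul]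
    simp only [negMulLog, log_inv]
    field_simp
    ring
  have h2 : d * negMulLog (1 - ε / d) ≤ ε := by
    have := negMulLog_le_one_sub_self (sub_nonneg.2 ((div_le_one hd).2 hεd))
    calc d * negMulLog (1 - ε / d) ≤ d * (ε / d) := by gcongr; linarith
      _ = ε := by field_simp
  rw [binEntropy_eq_negMulLog_add_negMulLog_one_sub, mul_add]
  linarith

theorem natCast_mul_binEntropy_div_le {d : ℕ} (hd : 2 ≤ d) {δ ε : ℝ} (hδ0 : 0 ≤ δ)
    (hδε : δ ≤ ε) (hε1 : ε ≤ 1) :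
    d * binEntropy (δ / d) ≤ 4 * ε * log d + 2 * binEntropy ε := by
  have hd2 : (2 : ℝ) ≤ d := by exact_mod_cast hd
  have hεd : ε / d ≤ 2⁻¹ := by rw [div_le_iff₀ (by linarith)]; linarith
  have hlog : 1 / 3 ≤ log d :=
    (by linarith [log_two_gt_d9] : (1 : ℝ) / 3 ≤ log 2).trans (log_le_log two_pos hd2)
  have hη := negMulLog_nonneg (sub_nonneg.2 hε1) (by linarith)
  have hh := binEntropy_nonneg (hδ0.trans hδε) hε1
  calc d * binEntropy (δ / d) ≤ d * binEntropy (ε / d) := by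
        gcongr
        refine binEntropy_strictMonoOn.monotoneOn ⟨by positivity, le_trans ?_ hεd⟩
          ⟨div_nonneg (hδ0.trans hδε) (by positivity), hεd⟩ ?_ <;> gcongr
    _ ≤ ε * log d + negMulLog ε + ε := mul_binEntropy_div_le (by positivity) (by linarith)
    _ ≤ 4 * ε * log d + 2 * binEntropy ε := by
        rw [binEntropy_eq_negMulLog_add_negMulLog_one_sub] at hh ⊢
        nlinarith

theorem mul_abs_sub_div_eq {q P R : ℝ} (hq : 0 ≤ q) (hqR : q ≤ R) :
    R * |P - q / R| = |q - P * R| := by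
  rcases (hq.trans hqR).eq_or_lt with h | h
  · simp [← h, le_antisymm (h ▸ hqR) hq]
  · rw [← abs_of_pos h, ← abs_mul, abs_of_pos h, abs_sub_comm]
    congr 1
    field_simp

theorem mul_log_div_mul_eq {q P R : ℝ} (hq : 0 ≤ q) (hqP : q ≤ P) (hqR : q ≤ R) :
    q * log (q / (P * R)) = -(q * log P) - R * negMulLog (q / R) := by
  rcases hq.eq_or_lt with rfl | hq
  · simp
  have hP : 0 < P := hq.trans_le hqP
  have hR : 0 < R := hq.trans_le hqR
  rw [log_div hq.ne' (by positivity), log_mul hP.ne' hR.ne', negMulLog, log_div hq.ne' hR.ne']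
  field_simp
  ring

section MutualInformation

variable {M X : Type*}

def fstMarginal [Fintype X] (q : M → X → ℝ) (m : M) : ℝ := ∑ i, q m i

def sndMarginal [Fintype M] (q : M → X → ℝ) (i : X) : ℝ := ∑ m, q m i

theorem le_fstMarginal [Fintype X] {q : M → X → ℝ} (hq : ∀ m i, 0 ≤ q m i) (m : M) (i : X) :
    q m i ≤ fstMarginal q m :=
  Finset.single_le_sum (fun j _ => hq m j) (Finset.mem_univ i)

theorem le_sndMarginal [Fintype M] {q : M → X → ℝ} (hq : ∀ m i, 0 ≤ q m i) (m : M) (i : X) :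
    q m i ≤ sndMarginal q i :=
  Finset.single_le_sum (fun j _ => hq j i) (Finset.mem_univ m)

variable [Fintype M] [Fintype X]

def mutInfoNats (q : M → X → ℝ) : ℝ :=
  ∑ m, ∑ i, q m i * log (q m i / (fstMarginal q m * sndMarginal q i))

theorem mutInfo_eq_mutInfoNats_div_log_two (q : M → X → ℝ) :
    mutInfo q = mutInfoNats q / log 2 := by
  simp only [mutInfo, mutInfoNats, fstMarginal, sndMarginal, logb, Finset.sum_div, mul_div_assoc]

theorem sum_sndMarginal (q : M → X → ℝ) : ∑ i, sndMarginal q i = ∑ m, ∑ i, q m i :=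
  Finset.sum_comm

theorem mutInfoNats_eq_sum_mul_sum_negMulLog_sub {q : M → X → ℝ} (hq0 : ∀ m i, 0 ≤ q m i)
    (hq1 : ∑ m, ∑ i, q m i = 1) :
    mutInfoNats q = ∑ i, sndMarginal q i *
      ∑ m, (negMulLog (fstMarginal q m) - negMulLog (q m i / sndMarginal q i)) := by
  have hR1 : ∑ i, sndMarginal q i = 1 := (sum_sndMarginal q).trans hq1
  calc mutInfoNats q
      = ∑ m, ∑ i, (-(q m i * log (fstMarginal q m))
          - sndMarginal q i * negMulLog (q m i / sndMarginal q i)) := by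
        refine Finset.sum_congr rfl fun m _ => Finset.sum_congr rfl fun i _ => ?_
        exact mul_log_div_mul_eq (hq0 m i) (le_fstMarginal hq0 m i) (le_sndMarginal hq0 m i)
    _ = ∑ m, negMulLog (fstMarginal q m)
          - ∑ i, sndMarginal q i * ∑ m, negMulLog (q m i / sndMarginal q i) := by
        simp only [Finset.sum_sub_distrib, Finset.mul_sum]
        congr 1
        · refine Finset.sum_congr rfl fun m _ => ?_
          rw [Finset.sum_neg_distrib, ← Finset.sum_mul, negMulLog, neg_mul]
          rfl
        · exact Finset.sum_comm
    _ = _ := by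
        simp only [mul_sub, Finset.sum_sub_distrib, ← Finset.sum_mul, hR1, one_mul]

theorem sum_mul_sum_binEntropy_le_card_mul [Nonempty M] {w : X → ℝ} (hw0 : ∀ i, 0 ≤ w i)
    (hw1 : ∑ i, w i = 1) {x : M → X → ℝ} (hx : ∀ m i, x m i ∈ Set.Icc (0 : ℝ) 1) :
    ∑ i, w i * ∑ m, binEntropy (x m i)
      ≤ Fintype.card M * binEntropy ((∑ i, w i * ∑ m, x m i) / Fintype.card M) := by
  have hd : (0 : ℝ) < Fintype.card M := by exact_mod_cast Fintype.card_pos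
  have hsum (f : M → X → ℝ) :
      ∑ mi : M × X, w mi.2 / Fintype.card M * f mi.1 mi.2
        = (∑ i, w i * ∑ m, f m i) / Fintype.card M := by
    simp only [Fintype.sum_prod_type, Finset.sum_div, Finset.mul_sum]
    rw [Finset.sum_comm]
    exact Finset.sum_congr rfl fun i _ => Finset.sum_congr rfl fun m _ => by ring
  have hJ := strictConcave_binEntropy.concaveOn.le_map_sum (t := Finset.univ)
    (w := fun mi : M × X => w mi.2 / Fintype.card M) (p := fun mi => x mi.1 mi.2)
    (fun mi _ => div_nonneg (hw0 mi.2) hd.le)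
    (by simp [Fintype.sum_prod_type, ← Finset.sum_div, hw1, hd.ne'])
    (fun mi _ => hx mi.1 mi.2)
  simp only [smul_eq_mul] at hJ
  rw [hsum fun m i => binEntropy (x m i), hsum x] at hJ
  rwa [div_le_iff₀' hd] at hJ

theorem mutInfoNats_eq_zero_of_subsingleton [Subsingleton M] {q : M → X → ℝ}
    (hq1 : ∑ m, ∑ i, q m i = 1) : mutInfoNats q = 0 := by
  refine Finset.sum_eq_zero fun m _ => Finset.sum_eq_zero fun i _ => ?_
  have hP : fstMarginal q m = 1 := by rw [← hq1, Fintype.sum_subsingleton _ m]; rfl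
  have hR : sndMarginal q i = q m i := Fintype.sum_subsingleton _ m
  rw [hP, hR, one_mul]
  rcases eq_or_ne (q m i) 0 with h | h
  · simp [h]
  · simp [div_self h]

theorem mutInfoNats_le_of_sum_abs_sub_le {q : M → X → ℝ} (hq0 : ∀ m i, 0 ≤ q m i)
    (hq1 : ∑ m, ∑ i, q m i = 1) {ε : ℝ} (hε0 : 0 ≤ ε) (hε1 : ε ≤ 1)
    (hδ : ∑ m, ∑ i, |q m i - fstMarginal q m * sndMarginal q i| ≤ ε) :
    mutInfoNats q ≤ 4 * ε * log (Fintype.card M) + 2 * binEntropy ε := by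
  rcases le_or_gt (Fintype.card M) 1 with hd | hd
  · have := Fintype.card_le_one_iff_subsingleton.1 hd
    rw [mutInfoNats_eq_zero_of_subsingleton hq1]
    have := binEntropy_nonneg hε0 hε1
    have := log_natCast_nonneg (Fintype.card M)
    positivity
  have : Nonempty M := Fintype.card_pos_iff.1 (by omega)
  set P := fstMarginal q
  set R := sndMarginal q
  have hR0 : ∀ i, 0 ≤ R i := fun i => Finset.sum_nonneg fun m _ => hq0 m i
  have hP : ∀ m, P m ∈ Set.Icc (0 : ℝ) 1 := fun m =>
    ⟨Finset.sum_nonneg fun i _ => hq0 m i, hq1 ▸ Finset.single_le_sum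
      (f := fstMarginal q) (fun m _ => Finset.sum_nonneg fun i _ => hq0 m i) (Finset.mem_univ m)⟩
  have hu : ∀ m i, q m i / R i ∈ Set.Icc (0 : ℝ) 1 := fun m i =>
    ⟨div_nonneg (hq0 m i) (hR0 i), div_le_one_of_le₀ (le_sndMarginal hq0 m i) (hR0 i)⟩
  calc mutInfoNats q
      = ∑ i, R i * ∑ m, (negMulLog (P m) - negMulLog (q m i / R i)) :=
        mutInfoNats_eq_sum_mul_sum_negMulLog_sub hq0 hq1
    _ ≤ ∑ i, R i * ∑ m, binEntropy |P m - q m i / R i| := by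
        gcongr with i _ m _
        · exact hR0 i
        · exact negMulLog_sub_negMulLog_le_binEntropy (hP m).1 (hP m).2 (hu m i).1 (hu m i).2
    _ ≤ Fintype.card M * binEntropy ((∑ i, R i * ∑ m, |P m - q m i / R i|) / Fintype.card M) :=
        sum_mul_sum_binEntropy_le_card_mul hR0 ((sum_sndMarginal q).trans hq1)
          fun m i => ⟨abs_nonneg _, abs_sub_le_iff.2
            ⟨by linarith [(hP m).2, (hu m i).1], by linarith [(hP m).1, (hu m i).2]⟩⟩
    _ ≤ 4 * ε * log (Fintype.card M) + 2 * binEntropy ε := by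
        have hdist m i : R i * |P m - q m i / R i| = |q m i - P m * R i| :=
          mul_abs_sub_div_eq (hq0 m i) (le_sndMarginal hq0 m i)
        simp only [Finset.mul_sum, hdist]
        rw [Finset.sum_comm]
        exact natCast_mul_binEntropy_div_le hd (by positivity) hδ hε1

theorem mutInfo_le_of_sum_abs_sub_le {q : M → X → ℝ} (hq0 : ∀ m i, 0 ≤ q m i)
    (hq1 : ∑ m, ∑ i, q m i = 1) {ε : ℝ} (hε0 : 0 ≤ ε) (hε1 : ε ≤ 1)
    (hδ : ∑ m, ∑ i, |q m i - fstMarginal q m * sndMarginal q i| ≤ ε) :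
    mutInfo q ≤ 4 * ε * logb 2 (Fintype.card M) + 2 * etaFn (1 - ε) + 2 * etaFn ε := by
  have hRHS : 4 * ε * logb 2 (Fintype.card M) + 2 * etaFn (1 - ε) + 2 * etaFn ε
      = (4 * ε * log (Fintype.card M) + 2 * binEntropy ε) / log 2 := by
    rw [etaFn, etaFn, logb, logb, logb, binEntropy_eq_negMulLog_add_negMulLog_one_sub, negMulLog,
      negMulLog]
    ring
  rw [mutInfo_eq_mutInfoNats_div_log_two, hRHS]
  gcongr
  exact mutInfoNats_le_of_sum_abs_sub_le hq0 hq1 hε0 hε1 hδ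

end MutualInformation

section Measurement

open scoped MatrixOrder

theorem Matrix.PosSemidef.trace_mul_nonneg {n : Type*} [Fintype n] [DecidableEq n]
    {A B : Matrix n n ℂ} (hA : A.PosSemidef) (hB : B.PosSemidef) : 0 ≤ (A * B).trace := by
  -- `Tr(AB) = Tr(√B A √B)` and `√B A √B` is positive semidefinite
  rw [← CFC.sqrt_mul_sqrt_self B hB.nonneg, ← mul_assoc, trace_mul_comm, ← mul_assoc]
  have h := hA.conjTranspose_mul_mul_same (CFC.sqrt B)
  rw [(CFC.sqrt_nonneg B).posSemidef.1] at h
  exact h.trace_nonneg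

theorem traceNorm_eq_re_trace_sqrt {n : Type*} [Fintype n] [DecidableEq n] (A : Matrix n n ℂ) :
    traceNorm A = (CFC.sqrt (Aᴴ * A)).trace.re := by
  have hP := posSemidef_conjTranspose_mul_self A
  rw [traceNorm, CFC.sqrt_eq_cfc, cfc_nnreal_eq_real _ _ hP.nonneg, hP.1.cfc_eq, IsHermitian.cfc,
    Unitary.conjStarAlgAut_apply]
  congr 5
  funext k
  simp [max_eq_left (hP.eigenvalues_nonneg k)]

theorem traceNorm_diagonal_ofReal {n : Type*} [Fintype n] [DecidableEq n] (z : n → ℝ) :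
    traceNorm (diagonal fun k => (z k : ℂ)) = ∑ k, |z k| := by
  have hsqrt : CFC.sqrt ((diagonal fun k => (z k : ℂ))ᴴ * diagonal fun k => (z k : ℂ))
      = diagonal fun k => ((|z k| : ℝ) : ℂ) := by
    refine (CFC.sqrt_eq_iff _ _ (posSemidef_conjTranspose_mul_self _).nonneg
      (PosSemidef.diagonal (d := fun k => ((|z k| : ℝ) : ℂ)) fun k => by simp).nonneg).2 ?_
    simp only [diagonal_conjTranspose, diagonal_mul_diagonal]
    congr 1
    funext k
    simp [← Complex.ofReal_mul, abs_mul_abs_self]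
  rw [traceNorm_eq_re_trace_sqrt, hsqrt, trace_diagonal, Complex.re_sum]
  simp

theorem measApply0_eq_diagonal {A X : Type*} [Fintype A] [DecidableEq X]
    (Ms : X → Matrix A A ℂ) (ρ : Matrix A A ℂ) :
    measApply0 Ms ρ = diagonal fun i => (Ms i * ρ).trace := by
  ext i j
  simp only [measApply0, of_apply, diagonal_apply, trace, diag_apply, mul_apply]

theorem measApply_eq_diagonal {W A X : Type*} [Fintype A] [DecidableEq W] [DecidableEq X]
    (Ms : X → Matrix A A ℂ) (c : W → ℂ) (ρ : W → Matrix A A ℂ) :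
    measApply Ms (of fun x y => if x.1 = y.1 then c x.1 * ρ x.1 x.2 y.2 else 0)
      = diagonal fun x => c x.1 * (Ms x.2 * ρ x.1).trace := by
  ext ⟨w, i⟩ ⟨w', i'⟩
  simp only [measApply, of_apply, diagonal_apply, Prod.mk.injEq, trace, diag_apply, mul_apply]
  by_cases hi : i = i' <;> by_cases hw : w = w' <;> simp [hi, hw, Finset.mul_sum, mul_left_comm]

end Measurement

/-- The trace-distance form of locking bounds the accessible information
(Lemma `lem:alicki-fannes`): any measurement on `B` yields outcomes whose mutual
information with `M` is at most `4ε log|M| + 2η(1−ε) + 2η(ε)`. -/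
theorem locking_bounds_accessible_information
    (dM dB : ℕ)
    (p : Fin dM → ℝ) (hp0 : ∀ m, 0 ≤ p m) (hp1 : ∑ m, p m = 1)
    (ξ : Fin dM → Matrix (Fin dB) (Fin dB) ℂ)
    (hξ : ∀ m, (ξ m).PosSemidef ∧ (ξ m).trace = 1)
    (ε : ℝ) (hε0 : 0 ≤ ε) (hε1 : ε ≤ 1)
    (hlock : ∀ (NX : ℕ) (Ms : Fin NX → Matrix (Fin dB) (Fin dB) ℂ), IsPOVM Ms →
      traceNorm
        (measApply Ms (Matrix.of fun (x : Fin dM × Fin dB) (y : Fin dM × Fin dB) =>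
            if x.1 = y.1 then (p x.1 : ℂ) * ξ x.1 x.2 y.2 else 0)
          - (Matrix.diagonal fun m => (p m : ℂ)) ⊗ₖ
              measApply0 Ms (∑ m, (p m : ℂ) • ξ m)) ≤ ε) :
    ∀ (KX : ℕ) (Ns : Fin KX → Matrix (Fin dB) (Fin dB) ℂ), IsPOVM Ns →
      mutInfo (fun (m : Fin dM) (i : Fin KX) =>
          p m * (∑ a, ∑ a', Ns i a a' * ξ m a' a).re)
        ≤ 4 * ε * Real.logb 2 (dM : ℝ) + 2 * etaFn (1 - ε) + 2 * etaFn ε := by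
  intro KX Ns hNs
  set t : Fin dM → Fin KX → ℂ := fun m i => (Ns i * ξ m).trace
  have ht : ∀ m i, ((t m i).re : ℂ) = t m i := fun m i =>
    (Complex.eq_re_of_ofReal_le ((hNs.1 i).trace_mul_nonneg (hξ m).1)).symm
  set q : Fin dM → Fin KX → ℝ := fun m i => p m * (t m i).re
  have hP : fstMarginal q = p := funext fun m => by
    have hrow : ∑ i, t m i = 1 := by
      rw [← trace_sum, ← Finset.sum_mul, hNs.2, one_mul, (hξ m).2]
    simp only [fstMarginal, q, ← Finset.mul_sum, ← Complex.re_sum, hrow, Complex.one_re, mul_one]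
  have hq0 : ∀ m i, 0 ≤ q m i := fun m i => mul_nonneg (hp0 m)
    (Complex.nonneg_iff.1 ((hNs.1 i).trace_mul_nonneg (hξ m).1)).1
  have hq1 : ∑ m, ∑ i, q m i = 1 := by rw [← hp1, ← hP]; rfl
  have hdist : measApply Ns (Matrix.of fun (x : Fin dM × Fin dB) (y : Fin dM × Fin dB) =>
        if x.1 = y.1 then (p x.1 : ℂ) * ξ x.1 x.2 y.2 else 0)
      - (Matrix.diagonal fun m => (p m : ℂ)) ⊗ₖ measApply0 Ns (∑ m, (p m : ℂ) • ξ m)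
      = diagonal fun x => ((q x.1 x.2 - fstMarginal q x.1 * sndMarginal q x.2 : ℝ) : ℂ) := by
    rw [measApply_eq_diagonal Ns (fun m => (p m : ℂ)) ξ, measApply0_eq_diagonal,
      diagonal_kronecker_diagonal, diagonal_sub, hP]
    congr 1
    funext x
    simp only [Matrix.mul_sum, trace_sum, Matrix.mul_smul, trace_smul, smul_eq_mul, sndMarginal, q]
    push_cast
    simp only [ht, t]
  have hδ := hlock KX Ns hNs
  rw [hdist, traceNorm_diagonal_ofReal, Fintype.sum_prod_type] at hδ
  have h := mutInfo_le_of_sum_abs_sub_le hq0 hq1 hε0 hε1 hδ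
  rwa [Fintype.card_fin] at h
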